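/- If p/q is the truncated Catalan product √2_E in lowest terms (E ≡ 2 mod 4, E ≥ 14) and n is a positive integer, then 10^n·p/q is not an integer. -/

import Mathlib

/-- Numerator `N_E = 2²·6²···(E-4)²·E` of the truncated Catalan product. -/
def catalanNum (E : ℕ) : ℕ := (∏ k ∈ Finset.range ((E - 2) / 4), (4 * k + 2) ^ 2) * E

/-- Denominator `D_E = (1·3)(5·7)···((E-5)(E-3))·(E-1)` of the truncated Catalan product. -/
def catalanDen (E : ℕ) : ℕ :=
  (∏ k ∈ Finset.range ((E - 2) / 4), (4 * k + 1) * (4 * k + 3)) * (E - 1)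

/-!
Write `E = 2(2m+1)`. By Bertrand's postulate there is a prime `r` with `2m+1 < r ≤ E`; it is odd,
so `r < E`. Every odd number below `E` is a factor of `D_E`, while every prime factor of `N_E`
other than `2` is at most `E/2`; hence `r` divides `D_E` but not `N_E`, and therefore divides the
reduced denominator `q`. As `r > 5` and `r ∤ p`, it does not divide `10ⁿ·p`.
-/

theorem odd_dvd_catalanDen {E r : ℕ} (hE : E % 4 = 2) (hr : Odd r) (hrE : r < E) :
    r ∣ catalanDen E := by
  obtain ⟨j, rfl⟩ := hr
  unfold catalanDen
  by_cases htop : 2 * j + 1 = E - 1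
  · exact htop ▸ dvd_mul_left _ _
  have hk : j / 2 ∈ Finset.range ((E - 2) / 4) := Finset.mem_range.mpr (by omega)
  refine dvd_mul_of_dvd_left (dvd_trans ?_ (Finset.dvd_prod_of_mem _ hk)) _
  rcases Nat.even_or_odd j with ⟨i, rfl⟩ | ⟨i, rfl⟩
  · exact ⟨4 * i + 3, by rw [show (i + i) / 2 = i by omega]; ring⟩
  · exact ⟨4 * i + 1, by rw [show (2 * i + 1) / 2 = i by omega]; ring⟩

theorem catalanDen_pos {E : ℕ} (hE : 2 ≤ E) : 0 < catalanDen E :=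
  Nat.mul_pos (Finset.prod_pos fun _ _ => by positivity) (by omega)

theorem Nat.Prime.two_mul_le_of_dvd_catalanNum {E r : ℕ} (hE : E % 4 = 2) (hr : r.Prime)
    (hr_odd : Odd r) (hrN : r ∣ catalanNum E) : 2 * r ≤ E := by
  have key : ∀ f, 2 ∣ f → 0 < f → f ≤ E → r ∣ f → 2 * r ≤ f := fun f h2 hf _ hrf =>
    Nat.le_of_dvd hf <| hr_odd.coprime_two_left.mul_dvd_of_dvd_of_dvd h2 hrf
  rcases hr.dvd_mul.mp hrN with hprod | hrE
  · obtain ⟨k, hk_mem, hrk⟩ := (Prime.dvd_finsetProd_iff hr.prime _).mp hprod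
    have hk : k < (E - 2) / 4 := Finset.mem_range.mp hk_mem
    have := key (4 * k + 2) ⟨2 * k + 1, by ring⟩ (by omega) (by omega) (hr.dvd_of_dvd_pow hrk)
    omega
  · exact key E ⟨E / 2, by omega⟩ (by omega) le_rfl hrE

theorem exists_prime_dvd_catalanDen_not_dvd_catalanNum {E : ℕ} (hE : E % 4 = 2) (hE6 : 6 ≤ E) :
    ∃ r, r.Prime ∧ E < 2 * r ∧ r ∣ catalanDen E ∧ ¬ r ∣ catalanNum E := by
  obtain ⟨r, hr, hlt, hle⟩ := Nat.exists_prime_lt_and_le_two_mul (E / 2) (by omega)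
  have hr_odd : Odd r := hr.odd_of_ne_two (by omega)
  have hrE : r < E := lt_of_le_of_ne (by omega) fun h => by
    rw [h, Nat.odd_iff] at hr_odd; omega
  exact ⟨r, hr, by omega, odd_dvd_catalanDen hE hr_odd hrE,
    fun h => absurd (hr.two_mul_le_of_dvd_catalanNum hE hr_odd h) (by omega)⟩

theorem Nat.Prime.dvd_den_of_div_eq {p q a b r : ℕ} (hr : r.Prime)
    (h : (p : ℝ) / q = a / b) (hb : b ≠ 0) (hrb : r ∣ b) (hra : ¬ r ∣ a) : r ∣ q := by
  rcases eq_or_ne q 0 with rfl | hq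
  · exact dvd_zero r
  have hcross : p * b = a * q := by
    rw [div_eq_div_iff (by exact_mod_cast hq) (by exact_mod_cast hb)] at h
    exact_mod_cast h
  exact (hr.dvd_mul.mp (hcross ▸ dvd_mul_of_dvd_right hrb p)).resolve_left hra

theorem Nat.Prime.not_exists_int_mul_div_eq {c p q r : ℕ} (hq : 0 < q) (hcop : p.Coprime q)
    (hr : r.Prime) (hrq : r ∣ q) (hrc : ¬ r ∣ c) : ¬ ∃ m : ℤ, (c * p : ℝ) / q = m := by
  rintro ⟨m, hm⟩
  have hqc : (q : ℤ) ∣ (c * p : ℕ) := ⟨m, by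
    rw [div_eq_iff (by positivity)] at hm
    exact_mod_cast (mul_comm (m : ℝ) q ▸ hm)⟩
  have hrcp : r ∣ c * p := hrq.trans (Int.natCast_dvd_natCast.mp hqc)
  have hrp : ¬ r ∣ p := fun hrp => hr.one_lt.ne' (Nat.eq_one_of_dvd_coprimes hcop hrp hrq)
  exact (hr.dvd_mul.mp hrcp).elim hrc hrp

theorem catalan_trunc_times_ten_pow_not_int (E n p q : ℕ) (hE : E % 4 = 2) (hE14 : 14 ≤ E)
    (hq : 0 < q) (hcop : Nat.Coprime p q)
    (hpq : (p : ℝ) / q = (catalanNum E : ℝ) / catalanDen E) :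
    ¬ ∃ m : ℤ, (10 ^ n * p : ℝ) / q = m := by
  obtain ⟨r, hr, hEr, hrD, hrN⟩ := exists_prime_dvd_catalanDen_not_dvd_catalanNum hE (by omega)
  have hrq : r ∣ q := hr.dvd_den_of_div_eq hpq (catalanDen_pos (by omega)).ne' hrD hrN
  have hr10 : ¬ r ∣ 10 ^ n := fun h => by
    rcases hr.dvd_mul.mp (show r ∣ 2 * 5 from hr.dvd_of_dvd_pow h) with h | h <;>
      have := Nat.le_of_dvd (by norm_num) h <;> omega
  exact_mod_cast hr.not_exists_int_mul_div_eq (c := 10 ^ n) hq hcop hrq hr10
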